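/- Let U ⊂ ℝⁿ be a bounded domain, n ≥ 3, and 1 ≤ q < p < n. Then L^{p, n-p}_w(U) embeds continuously into L^{q, n-q}(U). -/

import Mathlib

open MeasureTheory Metric Set ENNReal

/-- Weak `L^p` (Lorentz `L^{p,∞}`) quasinorm of `f` on `A ⊆ ℝⁿ`. -/
noncomputable def weakLpNorm {n : ℕ} (f : (Fin n → ℝ) → ℝ) (p : ℝ)
    (A : Set (Fin n → ℝ)) : ℝ≥0∞ :=
  ⨆ t : Ioi (0 : ℝ),
    ENNReal.ofReal t.1 * (volume {x ∈ A | t.1 < |f x|}) ^ (1 / p)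

/-- Morrey norm `‖f‖_{L^{p,λ}(U)} = sup_{x ∈ U, 0 < r ≤ diam U} r^{-λ/p} ‖f‖_{L^p(B_r(x) ∩ U)}`. -/
noncomputable def morreyNorm {n : ℕ} (f : (Fin n → ℝ) → ℝ) (p lam : ℝ)
    (U : Set (Fin n → ℝ)) : ℝ≥0∞ :=
  ⨆ x : U, ⨆ r : {r : ℝ // 0 < r ∧ r ≤ diam U},
    ENNReal.ofReal (r.1 ^ (-(lam / p))) *
      eLpNorm f (ENNReal.ofReal p) (volume.restrict (ball x.1 r.1 ∩ U))

/-- Weak Morrey quasinorm `‖f‖_{L^{p,λ}_w(U)} = sup_{x ∈ U, 0 < r ≤ diam U}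
`r^{-λ/p} ‖f‖_{L^p_w(B_r(x) ∩ U)}`. -/
noncomputable def weakMorreyNorm {n : ℕ} (f : (Fin n → ℝ) → ℝ) (p lam : ℝ)
    (U : Set (Fin n → ℝ)) : ℝ≥0∞ :=
  ⨆ x : U, ⨆ r : {r : ℝ // 0 < r ∧ r ≤ diam U},
    ENNReal.ofReal (r.1 ^ (-(lam / p))) * weakLpNorm f p (ball x.1 r.1 ∩ U)

lemma weakLp_dist_bound {n : ℕ} (f : (Fin n → ℝ) → ℝ) {p : ℝ} (hp : 0 < p)
    (A : Set (Fin n → ℝ)) {t : ℝ} (ht : 0 < t) :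
    volume {x ∈ A | t < |f x|} ≤ (weakLpNorm f p A / ENNReal.ofReal t) ^ p := by
  set μt := volume {x ∈ A | t < |f x|} with hμt
  have h1 : ENNReal.ofReal t * μt ^ (1/p) ≤ weakLpNorm f p A :=
    le_iSup (fun s : Ioi (0:ℝ) =>
      ENNReal.ofReal s.1 * (volume {x ∈ A | s.1 < |f x|}) ^ (1 / p)) ⟨t, ht⟩
  have h2 : μt ^ (1/p) ≤ weakLpNorm f p A / ENNReal.ofReal t := by
    rw [ENNReal.le_div_iff_mul_le (Or.inl (by simp [ht])) (Or.inl ENNReal.ofReal_ne_top)]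
    rwa [mul_comm]
  calc μt = (μt ^ (1/p)) ^ p := by
        rw [← ENNReal.rpow_mul, one_div_mul_cancel hp.ne', ENNReal.rpow_one]
    _ ≤ _ := ENNReal.rpow_le_rpow h2 hp.le

lemma key_estimate {n : ℕ} (f : (Fin n → ℝ) → ℝ) (hf : Measurable f)
    {p q : ℝ} (hq : 1 ≤ q) (hqp : q < p)
    (A : Set (Fin n → ℝ)) (hA : MeasurableSet A) {V : ℝ} (hV : 0 < V)
    (hAV : volume A ≤ ENNReal.ofReal V) :
    eLpNorm f (ENNReal.ofReal q) (volume.restrict A) ≤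
      ENNReal.ofReal ((q * (1/q + 1/(p-q))) ^ (1/q) * V ^ (1/q - 1/p)) * weakLpNorm f p A := by
  have hq0 : (0:ℝ) < q := by linarith
  have hp0 : (0:ℝ) < p := by linarith
  have hpq : (0:ℝ) < p - q := by linarith
  have hK0 : (0:ℝ) < q * (1/q + 1/(p-q)) := by positivity
  set W := weakLpNorm f p A with hW
  have hq_ne : ENNReal.ofReal q ≠ 0 := by simp [hq0]
  have help : eLpNorm f (ENNReal.ofReal q) (volume.restrict A) =
      (∫⁻ x, ENNReal.ofReal (|f x| ^ q) ∂(volume.restrict A)) ^ (1/q) := by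
    rw [eLpNorm_eq_lintegral_rpow_enorm_toReal hq_ne ENNReal.ofReal_ne_top]
    rw [ENNReal.toReal_ofReal hq0.le]
    congr 1
    refine lintegral_congr fun x => ?_
    rw [Real.enorm_eq_ofReal_abs, ENNReal.ofReal_rpow_of_nonneg (abs_nonneg _) hq0.le]
  have hlayer : ∫⁻ x, ENNReal.ofReal (|f x| ^ q) ∂(volume.restrict A) =
      ENNReal.ofReal q * ∫⁻ t in Ioi 0,
        volume {x ∈ A | t < |f x|} * ENNReal.ofReal (t ^ (q - 1)) := by
    rw [lintegral_rpow_eq_lintegral_meas_lt_mul (volume.restrict A)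
      (Filter.Eventually.of_forall fun x => abs_nonneg (f x)) hf.abs.aemeasurable hq0]
    congr 1
    refine setLIntegral_congr_fun measurableSet_Ioi
      (fun t ht => ?_)
    congr 1
    rw [Measure.restrict_apply (measurableSet_lt measurable_const hf.abs)]
    congr 1
    ext x
    simp only [mem_inter_iff, mem_setOf_eq, mem_sep_iff]
    exact and_comm
  rcases eq_top_or_lt_top W with hWtop | hWlt
  · have : ENNReal.ofReal ((q * (1/q + 1/(p-q))) ^ (1/q) * V ^ (1/q - 1/p)) ≠ 0 := by
      simp only [ne_eq, ENNReal.ofReal_eq_zero, not_le]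
      positivity
    rw [hWtop, ENNReal.mul_top this]
    exact le_top
  rcases eq_or_ne W 0 with hW0 | hWne
  · have hzero : ∀ t ∈ Ioi (0:ℝ),
        volume {x ∈ A | t < |f x|} * ENNReal.ofReal (t ^ (q - 1)) = 0 := by
      intro t ht
      have := weakLp_dist_bound f hp0 A ht
      rw [← hW, hW0, ENNReal.zero_div, ENNReal.zero_rpow_of_pos hp0] at this
      simp [le_zero_iff.mp this]
    have : ∫⁻ t in Ioi 0,
        volume {x ∈ A | t < |f x|} * ENNReal.ofReal (t ^ (q - 1)) = 0 := by
      rw [setLIntegral_congr_fun measurableSet_Ioi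
        hzero]
      simp
    rw [help, hlayer, this, mul_zero, ENNReal.zero_rpow_of_pos (by positivity)]
    exact zero_le
  set w := W.toReal with hw
  have hw0 : 0 < w := ENNReal.toReal_pos hWne hWlt.ne
  have hWeq : W = ENNReal.ofReal w := (ENNReal.ofReal_toReal hWlt.ne).symm
  set T := w * V ^ (-(1/p)) with hT
  have hT0 : 0 < T := by positivity
  set g : ℝ → ℝ≥0∞ := fun t => volume {x ∈ A | t < |f x|} * ENNReal.ofReal (t ^ (q - 1))
    with hg
  have hsplit : ∫⁻ t in Ioi 0, g t = (∫⁻ t in Ioc 0 T, g t) + ∫⁻ t in Ioi T, g t := by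
    rw [← lintegral_union measurableSet_Ioi (Ioc_disjoint_Ioi le_rfl),
      Ioc_union_Ioi_eq_Ioi hT0.le]
  have hJ1 : ∫⁻ t in Ioc 0 T, ENNReal.ofReal (t ^ (q - 1)) = ENNReal.ofReal (T ^ q / q) := by
    have hint : IntegrableOn (fun t : ℝ => t ^ (q - 1)) (Ioc 0 T) := by
      rw [← intervalIntegrable_iff_integrableOn_Ioc_of_le hT0.le]
      exact intervalIntegral.intervalIntegrable_rpow' (by linarith)
    rw [← ofReal_integral_eq_lintegral_ofReal hint ?_]
    · congr 1
      rw [← intervalIntegral.integral_of_le hT0.le,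
        integral_rpow (Or.inl (by linarith : (-1:ℝ) < q - 1))]
      rw [sub_add_cancel, Real.zero_rpow hq0.ne', sub_zero]
    · filter_upwards [self_mem_ae_restrict (measurableSet_Ioc :
        MeasurableSet (Ioc (0:ℝ) T))] with t ht
      exact Real.rpow_nonneg ht.1.le _
  have hI1 : ∫⁻ t in Ioc 0 T, g t ≤ ENNReal.ofReal V * ENNReal.ofReal (T ^ q / q) := by
    rw [← hJ1, ← lintegral_const_mul' _ _ ENNReal.ofReal_ne_top]
    refine setLIntegral_mono' measurableSet_Ioc fun t ht => ?_
    exact mul_le_mul_left ((measure_mono (sep_subset _ _)).trans hAV) _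
  have hJ2 : ∫⁻ t in Ioi T, ENNReal.ofReal (t ^ (q - 1 - p)) =
      ENNReal.ofReal (T ^ (q - p) / (p - q)) := by
    have hlt : q - 1 - p < -1 := by linarith
    have hint : IntegrableOn (fun t : ℝ => t ^ (q - 1 - p)) (Ioi T) :=
      integrableOn_Ioi_rpow_of_lt hlt hT0
    rw [← ofReal_integral_eq_lintegral_ofReal hint ?_]
    · congr 1
      rw [integral_Ioi_rpow_of_lt hlt hT0]
      have h' : q - 1 - p + 1 = q - p := by ring
      rw [h', div_eq_div_iff (by linarith) (by linarith)]
      ring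
    · filter_upwards [self_mem_ae_restrict (measurableSet_Ioi :
        MeasurableSet (Ioi T))] with t ht
      exact Real.rpow_nonneg (hT0.trans ht).le _
  have hI2 : ∫⁻ t in Ioi T, g t ≤ W ^ p * ENNReal.ofReal (T ^ (q - p) / (p - q)) := by
    rw [← hJ2, ← lintegral_const_mul' _ _ (by
      rw [hWeq]; exact ENNReal.rpow_ne_top_of_nonneg hp0.le ENNReal.ofReal_ne_top)]
    refine setLIntegral_mono' measurableSet_Ioi fun t ht => ?_
    have ht0 : (0:ℝ) < t := hT0.trans ht
    have hd := weakLp_dist_bound f hp0 A ht0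
    have h2 : ENNReal.ofReal (t^(q-1)) / ENNReal.ofReal (t^p) =
        ENNReal.ofReal (t^(q-1-p)) := by
      rw [← ENNReal.ofReal_div_of_pos (by positivity)]
      congr 1
      rw [← Real.rpow_sub ht0]
    have key : (W / ENNReal.ofReal t) ^ p * ENNReal.ofReal (t ^ (q - 1)) =
        W ^ p * ENNReal.ofReal (t ^ (q - 1 - p)) := by
      rw [ENNReal.div_rpow_of_nonneg _ _ hp0.le, ENNReal.ofReal_rpow_of_pos ht0,
        div_eq_mul_inv, mul_right_comm, mul_assoc, ← div_eq_mul_inv, h2]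
    rw [← key]
    exact mul_le_mul_left (hd.trans_eq (by rw [hW])) _
  -- nonnegativity of the real quantities
  have hTq0 : (0:ℝ) ≤ T ^ q / q := div_nonneg (Real.rpow_nonneg hT0.le _) hq0.le
  have hTqp0 : (0:ℝ) ≤ T ^ (q-p) / (p-q) := div_nonneg (Real.rpow_nonneg hT0.le _) hpq.le
  have hmain : ∫⁻ x, ENNReal.ofReal (|f x| ^ q) ∂(volume.restrict A) ≤
      ENNReal.ofReal (q * (V * (T ^ q / q) + w ^ p * (T ^ (q - p) / (p - q)))) := by
    rw [hlayer, hsplit]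
    calc ENNReal.ofReal q * ((∫⁻ t in Ioc 0 T, g t) + ∫⁻ t in Ioi T, g t)
        ≤ ENNReal.ofReal q * (ENNReal.ofReal V * ENNReal.ofReal (T^q/q)
            + W^p * ENNReal.ofReal (T^(q-p)/(p-q))) :=
          mul_le_mul_right (add_le_add hI1 hI2) _
      _ = _ := by
          rw [hWeq, ENNReal.ofReal_rpow_of_pos hw0, ← ENNReal.ofReal_mul hV.le,
            ← ENNReal.ofReal_mul (Real.rpow_nonneg hw0.le _),
            ← ENNReal.ofReal_add (mul_nonneg hV.le hTq0)
              (mul_nonneg (Real.rpow_nonneg hw0.le _) hTqp0),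
            ← ENNReal.ofReal_mul hq0.le]
  have hTq : T ^ q = w ^ q * V ^ (-(q / p)) := by
    rw [hT, Real.mul_rpow hw0.le (Real.rpow_nonneg hV.le _), ← Real.rpow_mul hV.le]
    congr 2
    ring
  have hTqp : T ^ (q - p) = w ^ (q - p) * V ^ ((p - q) / p) := by
    rw [hT, Real.mul_rpow hw0.le (Real.rpow_nonneg hV.le _), ← Real.rpow_mul hV.le]
    congr 2
    field_simp
    ring
  have hVV : V * V ^ (-(q/p)) = V ^ (1 - q/p) := by
    nth_rewrite 1 [← Real.rpow_one V]
    rw [← Real.rpow_add hV]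
    ring_nf
  have hww : w ^ p * w ^ (q - p) = w ^ q := by
    rw [← Real.rpow_add hw0]
    ring_nf
  have hVp : V ^ ((p-q)/p) = V ^ (1 - q/p) := by
    congr 1
    field_simp
  have hE : q * (V * (T ^ q / q) + w ^ p * (T ^ (q - p) / (p - q))) =
      (q * (1/q + 1/(p-q))) * (w ^ q * V ^ (1 - q/p)) := by
    rw [hTq, hTqp, hVp]
    have e1 : V * (w ^ q * V ^ (-(q/p)) / q) = w ^ q * V ^ (1 - q/p) / q := by
      rw [← hVV]; ring
    have e2 : w ^ p * (w ^ (q-p) * V ^ (1 - q/p) / (p-q)) =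
        w ^ q * V ^ (1 - q/p) / (p-q) := by
      rw [← hww]; ring
    rw [e1, e2]
    field_simp
  have hwV0 : (0:ℝ) ≤ w ^ q * V ^ (1 - q/p) :=
    mul_nonneg (Real.rpow_nonneg hw0.le _) (Real.rpow_nonneg hV.le _)
  have hfinal : eLpNorm f (ENNReal.ofReal q) (volume.restrict A) ≤
      ENNReal.ofReal ((q*(1/q+1/(p-q))) ^ (1/q) * V ^ (1/q - 1/p) * w) := by
    rw [help]
    calc (∫⁻ x, ENNReal.ofReal (|f x| ^ q) ∂(volume.restrict A)) ^ (1/q)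
        ≤ (ENNReal.ofReal (q * (V * (T ^ q / q) + w ^ p * (T ^ (q - p) / (p - q))))) ^ (1/q) :=
          ENNReal.rpow_le_rpow hmain (by positivity)
      _ = _ := by
          rw [hE, ENNReal.ofReal_rpow_of_nonneg (mul_nonneg hK0.le hwV0) (by positivity)]
          congr 1
          rw [Real.mul_rpow hK0.le hwV0,
            Real.mul_rpow (Real.rpow_nonneg hw0.le _) (Real.rpow_nonneg hV.le _),
            ← Real.rpow_mul hw0.le, ← Real.rpow_mul hV.le,
            mul_one_div_cancel hq0.ne', Real.rpow_one]
          have : (1 - q/p) * (1/q) = 1/q - 1/p := by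
            have h' : (1 - q/p) * (1/q) = (p - q)/(p*q) := by
              rw [one_sub_div hp0.ne', div_mul_div_comm, mul_one]
            rw [h', div_sub_div _ _ hq0.ne' hp0.ne', one_mul, mul_one, mul_comm]
          rw [this]
          ring
  rw [hWeq, ← ENNReal.ofReal_mul (by positivity)]
  exact hfinal


/-- for `n ≥ 3` and `1 ≤ q < p < n`, the weak Morrey space `L^{p,n-p}_w(U)`
embeds continuously into the Morrey space `L^{q,n-q}(U)` on a bounded domain `U ⊆ ℝⁿ`. -/
theorem weak_morrey_scale_embedding {n : ℕ} (hn : 3 ≤ n) (U : Set (Fin n → ℝ))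
    (hUopen : IsOpen U) (hUbdd : Bornology.IsBounded U) (hUne : U.Nonempty)
    (p q : ℝ) (hq : 1 ≤ q) (hqp : q < p) (hpn : p < n) :
    ∃ C : ℝ≥0∞, 0 < C ∧ C ≠ ⊤ ∧
      ∀ f : (Fin n → ℝ) → ℝ, Measurable f →
        morreyNorm f q ((n : ℝ) - q) U ≤ C * weakMorreyNorm f p ((n : ℝ) - p) U := by
  have hq0 : (0:ℝ) < q := by linarith
  have hp0 : (0:ℝ) < p := by linarith
  have hpq : (0:ℝ) < p - q := by linarith
  set K : ℝ := (q * (1/q + 1/(p-q))) ^ (1/q) * (2:ℝ) ^ ((n:ℝ)/q - (n:ℝ)/p) with hK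
  have hK0 : (0:ℝ) < K := by positivity
  refine ⟨ENNReal.ofReal K, by simp [hK0], ENNReal.ofReal_ne_top, fun f hf => ?_⟩
  rw [morreyNorm]
  refine iSup_le fun x => iSup_le fun r => ?_
  obtain ⟨r, hr0, hrd⟩ := r
  simp only
  set A : Set (Fin n → ℝ) := ball x.1 r ∩ U with hAdef
  have hA : MeasurableSet A := measurableSet_ball.inter hUopen.measurableSet
  have hV : (0:ℝ) < (2*r)^n := by positivity
  have hAV : volume A ≤ ENNReal.ofReal ((2*r)^n) := by
    calc volume A ≤ volume (ball x.1 r) := measure_mono inter_subset_left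
      _ = ENNReal.ofReal ((2*r)^(Fintype.card (Fin n))) := Real.volume_pi_ball _ hr0
      _ = ENNReal.ofReal ((2*r)^n) := by rw [Fintype.card_fin]
  have hkey := key_estimate f hf hq hqp A hA hV hAV
  set W := weakLpNorm f p A with hW
  have hle : ENNReal.ofReal (r ^ (-(((n:ℝ) - p) / p))) * W
      ≤ weakMorreyNorm f p ((n:ℝ) - p) U := by
    rw [weakMorreyNorm]
    exact le_iSup_of_le x (le_iSup_of_le ⟨r, hr0, hrd⟩ le_rfl)
  -- real exponent computation
  have hVr : ((2*r)^n : ℝ) ^ (1/q - 1/p) =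
      (2:ℝ) ^ ((n:ℝ)/q - (n:ℝ)/p) * r ^ ((n:ℝ)/q - (n:ℝ)/p) := by
    rw [← Real.rpow_natCast (2*r) n, ← Real.rpow_mul (by positivity),
      Real.mul_rpow zero_le_two hr0.le]
    congr 2 <;> · field_simp
  have hexp : r ^ (-(((n:ℝ) - q) / q)) * r ^ ((n:ℝ)/q - (n:ℝ)/p) =
      r ^ (-(((n:ℝ) - p) / p)) := by
    rw [← Real.rpow_add hr0]
    congr 1
    field_simp
    ring
  calc ENNReal.ofReal (r ^ (-(((n:ℝ) - q) / q))) *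
        eLpNorm f (ENNReal.ofReal q) (volume.restrict A)
      ≤ ENNReal.ofReal (r ^ (-(((n:ℝ) - q) / q))) *
        (ENNReal.ofReal ((q * (1/q + 1/(p-q))) ^ (1/q) * ((2*r)^n : ℝ) ^ (1/q - 1/p)) * W) :=
        mul_le_mul_right hkey _
    _ = ENNReal.ofReal K * (ENNReal.ofReal (r ^ (-(((n:ℝ) - p) / p))) * W) := by
        rw [← mul_assoc, ← ENNReal.ofReal_mul (Real.rpow_nonneg hr0.le _), ← mul_assoc,
          ← mul_assoc (ENNReal.ofReal K), ← ENNReal.ofReal_mul hK0.le]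
        congr 2
        rw [hVr]
        calc r ^ (-(((n:ℝ) - q) / q)) * (q * (1/q + 1/(p-q))) ^ (1/q) *
              ((2:ℝ) ^ ((n:ℝ)/q - (n:ℝ)/p) * r ^ ((n:ℝ)/q - (n:ℝ)/p))
            = (q * (1/q + 1/(p-q))) ^ (1/q) * (2:ℝ) ^ ((n:ℝ)/q - (n:ℝ)/p) *
              (r ^ (-(((n:ℝ) - q) / q)) * r ^ ((n:ℝ)/q - (n:ℝ)/p)) := by ring
          _ = K * r ^ (-(((n:ℝ) - p) / p)) := by rw [hexp, hK]
    _ ≤ ENNReal.ofReal K * weakMorreyNorm f p ((n:ℝ) - p) U := mul_le_mul_right hle _
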